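/- arXiv:2604.15636 — 6 statements merged into one kernel-verified Lean document; each statement's English description precedes it below -/
import Mathlib

section
/- Suppose there are n+1 action profiles a_0, a_1, …, a_n with R_{a_0} = c_{a_0} = 0, sorted so that for each i the breakpoint α_{i,i+1} = (c_{a_{i+1}} − c_{a_i})/(R_{a_{i+1}} − R_{a_i}) lies in [0,1] and R_{a_i} < R_{a_{i+1}}, and suppose the principal can, for each i, achieve profit at least (1 − α_{i,i+1}) R_{a_{i+1}} with some contract. Then the maximal welfare max_i (R_{a_i} − c_{a_i}) = R_{a_n} − c_{a_n} is at most n times the principal's optimal profit. -/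
/-!
Each consecutive welfare gain is at most `OPT`: writing `α` for the breakpoint of the step
from `i` to `i + 1`, the gain is `(1 - α) (R_{i+1} - R_i) ≤ (1 - α) R_{i+1} ≤ OPT`, because
`α ≤ 1` and rewards are nonnegative. Summing the `n` gains telescopes to the welfare of `a_n`.
-/

lemma sub_le_nsmul_of_forall_succ_sub_le {α : Type*} [AddCommGroup α] [PartialOrder α]
    [IsOrderedAddMonoid α] {f : ℕ → α} {C : α} {n : ℕ} (h : ∀ i < n, f (i + 1) - f i ≤ C) :
    f n - f 0 ≤ n • C := by
  simpa only [Finset.sum_range_sub, Finset.card_range] using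
    Finset.sum_le_card_nsmul (Finset.range n) _ C fun i hi ↦ h i (Finset.mem_range.mp hi)

lemma welfare_gain_le_one_sub_breakpoint_mul {r r' c c' : ℝ} (hr : 0 ≤ r) (hrr' : r < r')
    (hα : (c' - c) / (r' - r) ≤ 1) :
    (r' - c') - (r - c) ≤ (1 - (c' - c) / (r' - r)) * r' := by
  set α := (c' - c) / (r' - r)
  have hcost : α * (r' - r) = c' - c := div_mul_cancel₀ _ (sub_pos.mpr hrr').ne'
  calc (r' - c') - (r - c) = (1 - α) * (r' - r) := by linear_combination hcost
    _ ≤ (1 - α) * r' := by nlinarith [sub_nonneg.mpr hα]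

theorem welfare_le_breakpoints_mul_opt_general
    (n : ℕ) (R c : ℕ → ℝ) (OPT : ℝ)
    (hR0 : R 0 = 0) (hc0 : c 0 = 0)
    (hmono : ∀ i < n, R i < R (i + 1))
    (hbp : ∀ i < n, 0 ≤ (c (i + 1) - c i) / (R (i + 1) - R i) ∧
      (c (i + 1) - c i) / (R (i + 1) - R i) ≤ 1)
    (hOPT : ∀ i < n, (1 - (c (i + 1) - c i) / (R (i + 1) - R i)) * R (i + 1) ≤ OPT) :
    R n - c n ≤ n * OPT := by
  have hR : StrictMonoOn R (Set.Iic n) :=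
    strictMonoOn_of_lt_add_one Set.ordConnected_Iic fun i _ _ hi ↦ hmono i hi
  have hRnonneg (i : ℕ) (hi : i ≤ n) : 0 ≤ R i :=
    hR0 ▸ hR.monotoneOn (Set.mem_Iic.mpr (Nat.zero_le n)) hi (Nat.zero_le i)
  have hgain : ∀ i < n, (R (i + 1) - c (i + 1)) - (R i - c i) ≤ OPT := fun i hi ↦
    (welfare_gain_le_one_sub_breakpoint_mul (hRnonneg i hi.le) (hmono i hi) (hbp i hi).2).trans
      (hOPT i hi)
  simpa [hR0, hc0, nsmul_eq_mul] using
    sub_le_nsmul_of_forall_succ_sub_le (f := fun i ↦ R i - c i) hgain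

/-- If the `n+1` action profiles `a_0, …, a_n` (with `R_{a_0} = c_{a_0} = 0`) are sorted so that
each breakpoint `α_{i,i+1}` lies in `[0,1]` and rewards are increasing, and the principal's
optimal profit `OPT` is at least `(1 − α_{i,i+1}) R_{a_{i+1}}` for each `i`, then the maximal
welfare `R_{a_n} − c_{a_n}` is at most `n · OPT`. -/
theorem welfare_le_breakpoints_mul_opt
    (n : ℕ) (R c : ℕ → ℝ) (OPT : ℝ)
    (hR0 : R 0 = 0) (hc0 : c 0 = 0)
    (hmono : ∀ i < n, R i < R (i + 1))
    (hbp : ∀ i < n, 0 ≤ (c (i + 1) - c i) / (R (i + 1) - R i) ∧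
      (c (i + 1) - c i) / (R (i + 1) - R i) ≤ 1)
    (hOPT : ∀ i < n, (1 - (c (i + 1) - c i) / (R (i + 1) - R i)) * R (i + 1) ≤ OPT)
    (hmax : ∀ i ≤ n, R i - c i ≤ R n - c n) :
    R n - c n ≤ n * OPT :=
  welfare_le_breakpoints_mul_opt_general n R c OPT hR0 hc0 hmono hbp hOPT
end

section
/- In the instance of the previous statement (0 < q < p < 1, cost c > 0, reward x > (1+p−q)c/(1−p)), any standard contract (t_1, t_2) with t_1, t_2 ≥ 0 that incentivizes the action profile (a2, productive final action at s2) must satisfy t_2 ≥ (1−q)c/(1−p). In particular, the required expected payment under a standard contract is at least (1−q)c/(1−p)·(q + (1−q)) = (1−q)c/(1−p). -/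
/-- In the instance with `0 < q < p < 1`, `c > 0`, `x > (1+p−q)c/(1−p)`, any standard contract
`(t1, t2)` with nonnegative transfers that incentivizes the profile `(a2, productive final
action at s2)` — i.e. the productive action is optimal at `s2` and the initial action `a2`
(with the agent's optimal continuations) beats `a1` — must pay `t2 ≥ (1−q)c/(1−p)`; in
particular the expected payment is at least `(1−q)c/(1−p)`. -/
theorem standard_contract_payment_lower_bound
    (p q c x t1 t2 : ℝ)
    (hq : 0 < q) (hqp : q < p) (hp : p < 1) (hc : 0 < c)
    (hx : x > (1 + p - q) * c / (1 - p))
    (ht1 : 0 ≤ t1) (ht2 : 0 ≤ t2)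
    -- the productive final action is optimal at state s2:
    (hs2 : t2 - c ≥ t1)
    -- initial action a2 is optimal (continuation utilities: max t2 t1 at s1,
    -- max (t2 − c) t1 at s2, t1 at s3):
    (hinit : q * max t2 t1 + (1 - q) * max (t2 - c) t1 ≥
      p * max t2 t1 + (1 - p) * t1) :
    t2 ≥ (1 - q) * c / (1 - p) ∧
    q * t2 + (1 - q) * t2 ≥ (1 - q) * c / (1 - p) := by
  have hp1 : (0:ℝ) < 1 - p := by linarith
  have hm1 : max t2 t1 = t2 := max_eq_left (by linarith)
  have hm2 : max (t2 - c) t1 = t2 - c := max_eq_left hs2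
  rw [hm1, hm2] at hinit
  have key : (1 - q) * c / (1 - p) ≤ t2 := by
    rw [div_le_iff₀ hp1]; nlinarith
  exact ⟨key, by nlinarith⟩
end

section
/- In the same instance, the pay-halfway contract that pays ((p−q)/(1−q))·c at state s2 and c on outcome 2 (and 0 elsewhere) incentivizes the optimal action profile (a2, productive final actions) with total expected payment (1+p−q)c. Consequently, as p → 1 with q fixed, the ratio of the minimal standard-contract payment (at least (1−q)c/(1−p)) to the pay-halfway payment (1+p−q)c tends to infinity; i.e., for every K there exist valid parameters p, q, c, x for which the ratio exceeds K. -/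
/-- Profile: (initial action is a2?, productive final at s1?, productive final at s2?). -/
abbrev Profile8 : Type := Bool × Bool × Bool

/-- Agent's expected utility under the pay-halfway contract paying `((p−q)/(1−q))·c` at state
`s2` and `c` on the reward-`x` outcome (0 elsewhere), in the instance where `a1` (cost 0) goes
to `s1` w.p. `p` and `s3` w.p. `1−p`, and `a2` (cost 0) goes to `s1` w.p. `q` and `s2` w.p.
`1−q`; at `s1` the productive final action is free and yields the reward outcome surely; at
`s2` it costs `c` and yields the reward outcome surely, the null action yields the zero
outcome; `s3` yields only the zero outcome. -/
noncomputable def agentUPay8 (p q c : ℝ) (a : Profile8) : ℝ :=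
  if a.1 then
    q * (if a.2.1 then c else 0)
      + (1 - q) * ((if a.2.2 then c - c else 0) + (p - q) / (1 - q) * c)
  else
    p * (if a.2.1 then c else 0)

open Filter Topology

/-! The payment `((p−q)/(1−q))·c` at `s2` is exactly what makes `a2` worth `p·c` to the agent,
the best it can get from `a1`, and no profile is worth more. The ratio of the standard payment
to the pay-halfway payment is `(1−q) / ((1−p)(1+p−q))`, which blows up as `p → 1⁻`. -/

section PayHalfway

variable {p q c : ℝ}

theorem agentUPay8_true_true_true (hq : q ≠ 1) : agentUPay8 p q c (true, true, true) = p * c := by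
  have h1q : 1 - q ≠ 0 := sub_ne_zero.mpr hq.symm
  simp only [agentUPay8, if_true, sub_self, zero_add]
  field_simp
  ring

theorem agentUPay8_le (hq₀ : 0 ≤ q) (hq : q ≠ 1) (hp : 0 ≤ p) (hc : 0 ≤ c) (a : Profile8) :
    agentUPay8 p q c a ≤ p * c := by
  have h1q : 1 - q ≠ 0 := sub_ne_zero.mpr hq.symm
  have hs2 : (1 - q) * ((p - q) / (1 - q) * c) = (p - q) * c := by field_simp
  obtain ⟨_ | _, _ | _, _ | _⟩ := a <;>
    simp only [agentUPay8, Bool.false_eq_true, if_true, if_false, sub_self, zero_add,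
      mul_zero, hs2] <;>
    nlinarith [mul_nonneg hq₀ hc, mul_nonneg hp hc]

theorem payHalfway_expected_payment (hq : q ≠ 1) :
    q * c + (1 - q) * ((p - q) / (1 - q) * c + c) = (1 + p - q) * c := by
  have h1q : 1 - q ≠ 0 := sub_ne_zero.mpr hq.symm
  field_simp
  ring

end PayHalfway

theorem tendsto_standard_div_payHalfway_payment {q c : ℝ} (hq : q < 1) (hc : c ≠ 0) :
    Tendsto (fun p : ℝ => ((1 - q) * c / (1 - p)) / ((1 + p - q) * c)) (𝓝[<] 1) atTop := by
  have hcancel : (fun p : ℝ => ((1 - q) * c / (1 - p)) / ((1 + p - q) * c)) =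
      fun p => (1 - q) / (1 + p - q) * (1 - p)⁻¹ := by
    ext p
    rw [div_div, ← mul_assoc, mul_div_mul_right _ _ hc, mul_comm (1 - p), div_mul_eq_div_div,
      div_eq_mul_inv]
  have hfactor :
      Tendsto (fun p : ℝ => (1 - q) / (1 + p - q)) (𝓝[<] 1) (𝓝 ((1 - q) / (2 - q))) := by
    refine Tendsto.mono_left ?_ nhdsWithin_le_nhds
    have : ContinuousAt (fun p : ℝ => (1 - q) / (1 + p - q)) 1 :=
      continuousAt_const.div (by fun_prop) (by linarith)
    simpa [show (1 : ℝ) + 1 - q = 2 - q by ring] using this.tendsto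
  have hblowup : Tendsto (fun p : ℝ => (1 - p)⁻¹) (𝓝[<] 1) atTop := by
    refine tendsto_inv_nhdsGT_zero.comp (tendsto_nhdsWithin_iff.mpr ⟨?_, ?_⟩)
    · simpa using ((continuous_sub_left (1 : ℝ)).tendsto 1).mono_left nhdsWithin_le_nhds
    · filter_upwards [self_mem_nhdsWithin] with p hp
      exact sub_pos.mpr (Set.mem_Iio.mp hp)
  rw [hcancel]
  exact hfactor.pos_mul_atTop (div_pos (by linarith) (by linarith)) hblowup

theorem pay_halfway_payment_ratio_unbounded_general
    (p q c : ℝ) (hq : 0 < q) (hqp : q < p) (hp : p < 1) (hc : 0 < c) :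
    (∀ a : Profile8, agentUPay8 p q c a ≤ agentUPay8 p q c (true, true, true)) ∧
    (q * c + (1 - q) * ((p - q) / (1 - q) * c + c) = (1 + p - q) * c) ∧
    (∀ K : ℝ, ∃ p' q' c' x' : ℝ,
      0 < q' ∧ q' < p' ∧ p' < 1 ∧ 0 < c' ∧
      x' > (1 + p' - q') * c' / (1 - p') ∧
      ((1 - q') * c' / (1 - p')) / ((1 + p' - q') * c') > K) := by
  have hq1 : q < 1 := hqp.trans hp
  refine ⟨fun a => ?_, payHalfway_expected_payment hq1.ne, fun K => ?_⟩
  · rw [agentUPay8_true_true_true hq1.ne]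
    exact agentUPay8_le hq.le hq1.ne (hq.trans hqp).le hc.le a
  · obtain ⟨p', hK, hqp', hp'⟩ :=
      (((tendsto_standard_div_payHalfway_payment hq1 hc.ne').eventually_gt_atTop K).and
        (Ioo_mem_nhdsLT hq1)).exists
    exact ⟨p', q, c, _, hq, hqp', hp', hc, lt_add_one _, hK⟩

/-- The pay-halfway contract paying `((p−q)/(1−q))·c` at `s2` and `c` on the reward outcome
incentivizes the optimal profile `(a2, productive finals)` with total expected payment
`(1+p−q)c`; and the ratio of the minimal standard-contract payment `(1−q)c/(1−p)` to this
pay-halfway payment is unbounded over valid parameters. -/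
theorem pay_halfway_payment_ratio_unbounded
    (p q c x : ℝ) (hq : 0 < q) (hqp : q < p) (hp : p < 1) (hc : 0 < c)
    (hx : x > (1 + p - q) * c / (1 - p)) :
    (∀ a : Profile8, agentUPay8 p q c a ≤ agentUPay8 p q c (true, true, true)) ∧
    (q * c + (1 - q) * ((p - q) / (1 - q) * c + c) = (1 + p - q) * c) ∧
    (∀ K : ℝ, ∃ p' q' c' x' : ℝ,
      0 < q' ∧ q' < p' ∧ p' < 1 ∧ 0 < c' ∧
      x' > (1 + p' - q') * c' / (1 - p') ∧
      ((1 - q') * c' / (1 - p')) / ((1 + p' - q') * c') > K) :=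
  pay_halfway_payment_ratio_unbounded_general p q c hq hqp hp hc
end

section
/- In a tree two-stage process (each outcome m is reachable from at most one intermediate state), for every pay-halfway contract (s, t) there exists a standard contract t' achieving the same expected profit for the principal: define t'_m = t_m + s_{σ(m)}, where σ(m) is the unique predecessor state of outcome m. This contract incentivizes the same final action at every state, the same initial action, and incurs the same expected payment. Hence OPT-Pay = OPT-Standard in tree processes. -/
/-!
In a tree process outcome `m` can only be reached through the state `σ m`, so paying the
halfway bonus `spay (σ m)` on outcome `m` instead pays, at each state `s` and whatever final
action is taken there, exactly the constant `spay s` in expectation. Adding a constant at a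
state leaves the final-stage incentives unchanged and shifts the continuation utility by
`spay s`, which reproduces the initial-stage incentives and the expected payment of the
pay-halfway contract.
-/

/-- Agent's continuation utility at state `s` from final action `j` under outcome transfers `t`. -/
def stateUtil {S M N2 : ℕ} (Ff : Fin S → Fin N2 → Fin M → ℝ)
    (cFin : Fin S → Fin N2 → ℝ) (t : Fin M → ℝ) (s : Fin S) (j : Fin N2) : ℝ :=
  (∑ m, Ff s j m * t m) - cFin s j

open Finset

theorem sum_mul_comp_eq_of_support {ι κ R : Type*} [Fintype ι] [Semiring R] (p : ι → R)
    (σ : ι → κ) (g : κ → R) (k : κ) (hsum : ∑ i, p i = 1) (hsupp : ∀ i, p i ≠ 0 → σ i = k) :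
    ∑ i, p i * g (σ i) = g k := by
  have hpoint : ∀ i ∈ univ, p i * g (σ i) = p i * g k := by
    intro i _
    by_cases hi : p i = 0
    · simp [hi]
    · rw [hsupp i hi]
  rw [sum_congr rfl hpoint, ← sum_mul, hsum, one_mul]

theorem sum_mul_add_comp_eq_of_support {ι κ R : Type*} [Fintype ι] [Semiring R]
    (p : ι → R) (σ : ι → κ) (t : ι → R) (g : κ → R) (k : κ) (hsum : ∑ i, p i = 1)
    (hsupp : ∀ i, p i ≠ 0 → σ i = k) :
    ∑ i, p i * (t i + g (σ i)) = ∑ i, p i * t i + g k := by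
  simp only [mul_add, sum_add_distrib, sum_mul_comp_eq_of_support p σ g k hsum hsupp]

theorem stateUtil_add_comp_eq_of_support {S M N2 : ℕ} (Ff : Fin S → Fin N2 → Fin M → ℝ)
    (cFin : Fin S → Fin N2 → ℝ) (t : Fin M → ℝ) (σ : Fin M → Fin S) (g : Fin S → ℝ)
    (s : Fin S) (j : Fin N2) (hsum : ∑ m, Ff s j m = 1)
    (hsupp : ∀ m, Ff s j m ≠ 0 → σ m = s) :
    stateUtil Ff cFin (fun m => t m + g (σ m)) s j = stateUtil Ff cFin t s j + g s := by
  rw [stateUtil, stateUtil, sum_mul_add_comp_eq_of_support _ σ t g s hsum hsupp]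
  ring

theorem tree_pay_halfway_eq_standard_general
    (S M N1 N2 : ℕ)
    (F : Fin N1 → Fin S → ℝ) (cInit : Fin N1 → ℝ)
    (Ff : Fin S → Fin N2 → Fin M → ℝ) (cFin : Fin S → Fin N2 → ℝ)
    (hFf0 : ∀ s j m, 0 ≤ Ff s j m) (hFfsum : ∀ s j, ∑ m, Ff s j m = 1)
    (σ : Fin M → Fin S) (htree : ∀ s j m, 0 < Ff s j m → s = σ m)
    (spay : Fin S → ℝ) (t : Fin M → ℝ)
    (jstar : Fin S → Fin N2) (istar : Fin N1)
    (hjstar : ∀ s j, stateUtil Ff cFin t s j ≤ stateUtil Ff cFin t s (jstar s))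
    (histar : ∀ i,
      (∑ s, F i s * (stateUtil Ff cFin t s (jstar s) + spay s)) - cInit i ≤
      (∑ s, F istar s * (stateUtil Ff cFin t s (jstar s) + spay s)) - cInit istar) :
    -- the standard contract t' m = t m + spay (σ m):
    (∀ s j, stateUtil Ff cFin (fun m => t m + spay (σ m)) s j ≤
      stateUtil Ff cFin (fun m => t m + spay (σ m)) s (jstar s)) ∧
    (∀ i,
      (∑ s, F i s * stateUtil Ff cFin (fun m => t m + spay (σ m)) s (jstar s)) - cInit i ≤
      (∑ s, F istar s * stateUtil Ff cFin (fun m => t m + spay (σ m)) s (jstar s))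
        - cInit istar) ∧
    (∑ s, F istar s * (spay s + ∑ m, Ff s (jstar s) m * t m)) =
      (∑ s, F istar s * ∑ m, Ff s (jstar s) m * (t m + spay (σ m))) := by
  have hsupp : ∀ s j m, Ff s j m ≠ 0 → σ m = s := fun s j m hm =>
    (htree s j m ((hFf0 s j m).lt_of_ne' hm)).symm
  have hU : ∀ s j, stateUtil Ff cFin (fun m => t m + spay (σ m)) s j
      = stateUtil Ff cFin t s j + spay s := fun s j =>
    stateUtil_add_comp_eq_of_support Ff cFin t σ spay s j (hFfsum s j) (hsupp s j)
  refine ⟨fun s j => ?_, fun i => ?_, ?_⟩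
  · rw [hU, hU]
    exact add_le_add_left (hjstar s j) _
  · simpa only [hU] using histar i
  · refine sum_congr rfl fun s _ => ?_
    rw [sum_mul_add_comp_eq_of_support _ σ t spay s (hFfsum s (jstar s)) (hsupp s (jstar s)),
      add_comm]

/-- Tree two-stage process: each outcome `m` has the unique predecessor state `σ m`. Given a
pay-halfway contract `(spay, t)` with the agent best responding via final actions `jstar` and
initial action `istar`, the standard contract `t' m = t m + spay (σ m)` incentivizes the same
final action at every state, the same initial action, and incurs the same expected payment. -/
theorem tree_pay_halfway_eq_standard
    (S M N1 N2 : ℕ)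
    (F : Fin N1 → Fin S → ℝ) (cInit : Fin N1 → ℝ)
    (Ff : Fin S → Fin N2 → Fin M → ℝ) (cFin : Fin S → Fin N2 → ℝ)
    (hFf0 : ∀ s j m, 0 ≤ Ff s j m) (hFfsum : ∀ s j, ∑ m, Ff s j m = 1)
    (σ : Fin M → Fin S) (htree : ∀ s j m, 0 < Ff s j m → s = σ m)
    (spay : Fin S → ℝ) (t : Fin M → ℝ)
    (hspay : ∀ s, 0 ≤ spay s) (ht : ∀ m, 0 ≤ t m)
    (jstar : Fin S → Fin N2) (istar : Fin N1)
    (hjstar : ∀ s j, stateUtil Ff cFin t s j ≤ stateUtil Ff cFin t s (jstar s))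
    (histar : ∀ i,
      (∑ s, F i s * (stateUtil Ff cFin t s (jstar s) + spay s)) - cInit i ≤
      (∑ s, F istar s * (stateUtil Ff cFin t s (jstar s) + spay s)) - cInit istar) :
    -- the standard contract t' m = t m + spay (σ m):
    (∀ s j, stateUtil Ff cFin (fun m => t m + spay (σ m)) s j ≤
      stateUtil Ff cFin (fun m => t m + spay (σ m)) s (jstar s)) ∧
    (∀ i,
      (∑ s, F i s * stateUtil Ff cFin (fun m => t m + spay (σ m)) s (jstar s)) - cInit i ≤
      (∑ s, F istar s * stateUtil Ff cFin (fun m => t m + spay (σ m)) s (jstar s))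
        - cInit istar) ∧
    (∑ s, F istar s * (spay s + ∑ m, Ff s (jstar s) m * t m)) =
      (∑ s, F istar s * ∑ m, Ff s (jstar s) m * (t m + spay (σ m))) :=
  tree_pay_halfway_eq_standard_general S M N1 N2 F cInit Ff cFin hFf0 hFfsum σ htree spay t jstar
    istar hjstar histar
end

section
/- In a tree two-stage process, for every terminate-halfway contract (t, S) there is a standard contract achieving at least the same principal profit: set t'_m = 0 for every outcome m whose unique predecessor state lies in S, and t'_m = t_m otherwise. Hence OPT-Terminate = OPT-Standard in tree processes. -/
/-- Tree two-stage process: every outcome `m` has the unique predecessor state `σ m`. For a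
terminate-halfway contract `(t, T)` with agent best response `(istar, jstar)`, the standard
contract `t' m = 0` when `σ m ∈ T` and `t' m = t m` otherwise achieves at least the same
principal profit: any agent behavior `jstar'` agreeing with `jstar` off `T` and best
responding on `T` keeps all incentive constraints, and the principal's profit weakly
increases. -/
theorem tree_terminate_halfway_le_standard
    (S M N1 N2 : ℕ)
    (F : Fin N1 → Fin S → ℝ) (cInit : Fin N1 → ℝ)
    (Ff : Fin S → Fin N2 → Fin M → ℝ) (cFin : Fin S → Fin N2 → ℝ) (r : Fin M → ℝ)
    (hF0 : ∀ i s, 0 ≤ F i s)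
    (hFf0 : ∀ s j m, 0 ≤ Ff s j m) (hFfsum : ∀ s j, ∑ m, Ff s j m = 1)
    (hcFin : ∀ s j, 0 ≤ cFin s j) (hnullFin : ∀ s, ∃ j, cFin s j = 0)
    (hr : ∀ m, 0 ≤ r m)
    (σ : Fin M → Fin S) (htree : ∀ s j m, 0 < Ff s j m → s = σ m)
    (t : Fin M → ℝ) (ht : ∀ m, 0 ≤ t m) (T : Finset (Fin S))
    (jstar jstar' : Fin S → Fin N2) (istar : Fin N1)
    (hjstar : ∀ s ∉ T, ∀ j, stateUtil Ff cFin t s j ≤ stateUtil Ff cFin t s (jstar s))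
    (histar : ∀ i,
      (∑ s, if s ∈ T then 0 else F i s * stateUtil Ff cFin t s (jstar s)) - cInit i ≤
      (∑ s, if s ∈ T then 0 else F istar s * stateUtil Ff cFin t s (jstar s))
        - cInit istar)
    (hagree : ∀ s ∉ T, jstar' s = jstar s)
    (hbr' : ∀ s ∈ T, ∀ j,
      stateUtil Ff cFin (fun m => if σ m ∈ T then 0 else t m) s j ≤
      stateUtil Ff cFin (fun m => if σ m ∈ T then 0 else t m) s (jstar' s)) :
    -- under the standard contract t', jstar' is a best response at every state:
    (∀ s j, stateUtil Ff cFin (fun m => if σ m ∈ T then 0 else t m) s j ≤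
      stateUtil Ff cFin (fun m => if σ m ∈ T then 0 else t m) s (jstar' s)) ∧
    -- istar is still an optimal initial action under t':
    (∀ i,
      (∑ s, F i s * stateUtil Ff cFin (fun m => if σ m ∈ T then 0 else t m) s (jstar' s))
          - cInit i ≤
      (∑ s, F istar s *
          stateUtil Ff cFin (fun m => if σ m ∈ T then 0 else t m) s (jstar' s))
        - cInit istar) ∧
    -- the principal's profit under t' is at least the profit under (t, T):
    (∑ s, if s ∈ T then 0 else
        F istar s * ∑ m, Ff s (jstar s) m * (r m - t m)) ≤
      (∑ s, F istar s * ∑ m, Ff s (jstar' s) m *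
        (r m - if σ m ∈ T then 0 else t m)) := by
  have heq : ∀ s ∉ T, ∀ j (m : Fin M), Ff s j m ≠ 0 →
      (if σ m ∈ T then 0 else t m) = t m := by
    intro s hs j m hm
    have h := htree s j m (lt_of_le_of_ne (hFf0 s j m) (Ne.symm hm))
    rw [if_neg]; rw [← h]; exact hs
  have hzero : ∀ s ∈ T, ∀ j (m : Fin M), Ff s j m ≠ 0 →
      (if σ m ∈ T then 0 else t m) = 0 := by
    intro s hs j m hm
    have h := htree s j m (lt_of_le_of_ne (hFf0 s j m) (Ne.symm hm))
    rw [if_pos]; rw [← h]; exact hs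
  have hUeq : ∀ s ∉ T, ∀ j, stateUtil Ff cFin (fun m => if σ m ∈ T then 0 else t m) s j
      = stateUtil Ff cFin t s j := by
    intro s hs j
    unfold stateUtil
    congr 1
    apply Finset.sum_congr rfl
    intro m _
    dsimp only
    by_cases hm : Ff s j m = 0
    · simp [hm]
    · rw [heq s hs j m hm]
  have hUT : ∀ s ∈ T, ∀ j, stateUtil Ff cFin (fun m => if σ m ∈ T then 0 else t m) s j
      = -cFin s j := by
    intro s hs j
    unfold stateUtil
    have h0 : ∑ m, Ff s j m * (if σ m ∈ T then 0 else t m) = 0 := by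
      apply Finset.sum_eq_zero
      intro m _
      by_cases hm : Ff s j m = 0
      · simp [hm]
      · rw [hzero s hs j m hm, mul_zero]
    rw [h0]; ring
  have hU0 : ∀ s ∈ T, stateUtil Ff cFin (fun m => if σ m ∈ T then 0 else t m) s (jstar' s) = 0 := by
    intro s hs
    obtain ⟨j0, hj0⟩ := hnullFin s
    have h1 := hbr' s hs j0
    rw [hUT s hs (jstar' s), hUT s hs j0, hj0] at h1
    have h2 : -cFin s (jstar' s) ≤ 0 := neg_nonpos.mpr (hcFin s _)
    rw [hUT s hs]
    linarith
  refine ⟨?_, ?_, ?_⟩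
  · intro s j
    by_cases hs : s ∈ T
    · exact hbr' s hs j
    · rw [hUeq s hs, hUeq s hs, hagree s hs]
      exact hjstar s hs j
  · intro i
    have hsum : ∀ i', ∑ s, F i' s * stateUtil Ff cFin (fun m => if σ m ∈ T then 0 else t m) s (jstar' s)
        = ∑ s, if s ∈ T then 0 else F i' s * stateUtil Ff cFin t s (jstar s) := by
      intro i'
      apply Finset.sum_congr rfl
      intro s _
      by_cases hs : s ∈ T
      · rw [if_pos hs, hU0 s hs, mul_zero]
      · rw [if_neg hs, hUeq s hs, hagree s hs]
    rw [hsum i, hsum istar]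
    exact histar i
  · apply Finset.sum_le_sum
    intro s _
    by_cases hs : s ∈ T
    · rw [if_pos hs]
      apply mul_nonneg (hF0 istar s)
      apply Finset.sum_nonneg
      intro m _
      by_cases hm : Ff s (jstar' s) m = 0
      · simp [hm]
      · rw [hzero s hs _ m hm, sub_zero]
        exact mul_nonneg (hFf0 _ _ _) (hr m)
    · rw [if_neg hs, hagree s hs]
      apply le_of_eq
      congr 1
      apply Finset.sum_congr rfl
      intro m _
      by_cases hm : Ff s (jstar s) m = 0
      · simp [hm]
      · rw [heq s hs _ m hm]
end

section
/- In the geometric-cost construction: for λ ≥ 2, actions indexed i = 0, 1, 2, … with cost c_i = Σ_{k=1}^{i} λ^k and expected reward R_i = c_i + i (with c_0 = 0, R_0 = 0), each breakpoint satisfies α_i = (c_{i+1} − c_i)/(R_{i+1} − R_i) = λ^{i+1}/(λ^{i+1} + 1), and the principal's linear-contract profit at each breakpoint is bounded by a constant: (1 − α_i) R_{i+1} = (i + 1 + Σ_{k=1}^{i+1} λ^k)/(λ^{i+1} + 1) ≤ 3 for all i ≥ 0. -/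
/-! The cost and reward increments between consecutive actions are `λ^{i+1}` and
`λ^{i+1} + 1`, so `1 - α_i = 1/(λ^{i+1}+1)` and the profit is `R_{i+1}/(λ^{i+1}+1)`.
For `λ ≥ 2` the geometric sum `c_{i+1}` is at most `2λ^{i+1}` and, by Bernoulli,
`i + 1 ≤ λ^{i+1}`; hence `R_{i+1} ≤ 3λ^{i+1}`. -/

lemma geom_sum_Icc_one_le_two_mul_pow {lam : ℝ} (hlam : 2 ≤ lam) (n : ℕ) :
    ∑ k ∈ Finset.Icc 1 n, lam ^ k ≤ 2 * lam ^ n := by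
  induction n with
  | zero => simp
  | succ n ih =>
    rw [Finset.sum_Icc_succ_top (Nat.le_add_left 1 n), pow_succ]
    nlinarith [pow_nonneg (zero_le_two.trans hlam) n]

lemma natCast_add_one_le_pow {lam : ℝ} (hlam : 2 ≤ lam) (n : ℕ) : (n : ℝ) + 1 ≤ lam ^ n := by
  have h := one_add_mul_le_pow (a := lam - 1) (by linarith) n
  rw [add_sub_cancel] at h
  nlinarith [Nat.cast_nonneg (α := ℝ) n]

lemma natCast_add_geom_sum_Icc_one_le_three_mul_pow {lam : ℝ} (hlam : 2 ≤ lam) (n : ℕ) :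
    (n : ℝ) + ∑ k ∈ Finset.Icc 1 n, lam ^ k ≤ 3 * lam ^ n := by
  linarith [natCast_add_one_le_pow hlam n, geom_sum_Icc_one_le_two_mul_pow hlam n]

lemma one_sub_div_add_one_mul {x : ℝ} (hx : x + 1 ≠ 0) (y : ℝ) :
    (1 - x / (x + 1)) * y = y / (x + 1) := by
  field_simp
  ring

/-- Geometric-cost construction: with `λ ≥ 2`, costs `c_i = Σ_{k=1}^i λ^k` and rewards
`R_i = c_i + i`, each breakpoint equals `λ^{i+1}/(λ^{i+1}+1)` and the linear-contract profit
at each breakpoint, `(1 − α_i) R_{i+1} = (i+1+Σ_{k=1}^{i+1} λ^k)/(λ^{i+1}+1)`, is at most 3. -/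
theorem geometric_cost_breakpoints
    (lam : ℝ) (hlam : 2 ≤ lam) (c R : ℕ → ℝ)
    (hc : ∀ i, c i = ∑ k ∈ Finset.Icc 1 i, lam ^ k)
    (hR : ∀ i, R i = c i + i) :
    ∀ i : ℕ,
      (c (i + 1) - c i) / (R (i + 1) - R i) = lam ^ (i + 1) / (lam ^ (i + 1) + 1) ∧
      (1 - (c (i + 1) - c i) / (R (i + 1) - R i)) * R (i + 1) =
        ((i : ℝ) + 1 + ∑ k ∈ Finset.Icc 1 (i + 1), lam ^ k) / (lam ^ (i + 1) + 1) ∧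
      (1 - (c (i + 1) - c i) / (R (i + 1) - R i)) * R (i + 1) ≤ 3 := by
  intro i
  have hpos : 0 < lam ^ (i + 1) + 1 := by positivity
  have hc_step : c (i + 1) - c i = lam ^ (i + 1) := by
    rw [hc, hc, Finset.sum_Icc_succ_top (Nat.le_add_left 1 i), add_sub_cancel_left]
  have hR_step : R (i + 1) - R i = lam ^ (i + 1) + 1 := by
    rw [hR, hR, ← hc_step]
    push_cast
    ring
  have hα : (c (i + 1) - c i) / (R (i + 1) - R i) = lam ^ (i + 1) / (lam ^ (i + 1) + 1) := by
    rw [hc_step, hR_step]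
  have hprofit : (1 - (c (i + 1) - c i) / (R (i + 1) - R i)) * R (i + 1) =
      ((i : ℝ) + 1 + ∑ k ∈ Finset.Icc 1 (i + 1), lam ^ k) / (lam ^ (i + 1) + 1) := by
    rw [hα, one_sub_div_add_one_mul hpos.ne', hR, hc]
    push_cast
    ring
  refine ⟨hα, hprofit, ?_⟩
  rw [hprofit, div_le_iff₀ hpos]
  have hbound := natCast_add_geom_sum_Icc_one_le_three_mul_pow hlam (i + 1)
  push_cast at hbound
  linarith
end
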